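/- Fixed point of the coin-flip loop: define the map 𝓕 on pairs (𝒞, F), where 𝒞 is a linear map on 2×2 matrices and F a 2×2 matrix, by 𝓕(𝒞, F) := (ρ ↦ P₀ ρ P₀ + 𝒞(H P₁ ρ P₁ H), |0⟩⟨0| ) with P₀ = |0⟩⟨0|, P₁ = |1⟩⟨1|, and H the Hadamard matrix. Then the n-fold iterate 𝓕ⁿ(0,0) has first component ρ ↦ P₀ ρ P₀ + (Σ_{k=1}^{n-1} 2^{-k}) ⟨1|ρ|1⟩ |0⟩⟨0| for all n ≥ 1, and as n → ∞ this converges pointwise to ρ ↦ Tr(ρ) |0⟩⟨0|. -/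

import Mathlib

open Matrix

noncomputable def P0 : Matrix (Fin 2) (Fin 2) ℂ := Matrix.single 0 0 1
noncomputable def P1 : Matrix (Fin 2) (Fin 2) ℂ := Matrix.single 1 1 1

/-- The Hadamard matrix. -/
noncomputable def Had : Matrix (Fin 2) (Fin 2) ℂ :=
  ((1 / Real.sqrt 2 : ℝ) : ℂ) • !![1, 1; 1, -1]

/-- The semantic map of the coin-flip while loop:
`𝓕(𝒞, F) = (ρ ↦ P₀ ρ P₀ + 𝒞(H P₁ ρ P₁ H), |0⟩⟨0|)`. -/
noncomputable def coinStep
    (CF : (Matrix (Fin 2) (Fin 2) ℂ →ₗ[ℂ] Matrix (Fin 2) (Fin 2) ℂ) ×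
      Matrix (Fin 2) (Fin 2) ℂ) :
    (Matrix (Fin 2) (Fin 2) ℂ →ₗ[ℂ] Matrix (Fin 2) (Fin 2) ℂ) ×
      Matrix (Fin 2) (Fin 2) ℂ :=
  ((LinearMap.mulLeft ℂ P0).comp (LinearMap.mulRight ℂ P0) +
      CF.1.comp (((LinearMap.mulLeft ℂ Had).comp (LinearMap.mulRight ℂ Had)).comp
        ((LinearMap.mulLeft ℂ P1).comp (LinearMap.mulRight ℂ P1))),
    P0)

/-! Every iterate sends `ρ` to a multiple of `|0⟩⟨0|`. The branch `P₀` contributes `ρ₀₀`; the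
branch `P₁` followed by `H` produces `(ρ₁₁ / 2) [[1,-1],[-1,1]]`, both of whose diagonal entries are
`ρ₁₁ / 2`. Hence the coefficient `s m` of `ρ₁₁` obeys `s (m + 1) = (1 + s m) / 2`, so it is the
partial sum `∑_{k=1}^{m} 2⁻ᵏ → 1`, and the limiting coefficient is `ρ₀₀ + ρ₁₁ = Tr ρ`. -/

open Filter Finset Topology

section GeometricSums

variable {R : Type*}

theorem sum_Icc_one_pow_eq_mul_sum_range [Semiring R] (r : R) (m : ℕ) :
    ∑ k ∈ Icc 1 m, r ^ k = r * ∑ k ∈ range m, r ^ k := by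
  rw [← Ico_add_one_right_eq_Icc, sum_Ico_eq_sum_range, mul_sum, Nat.add_sub_cancel]
  exact sum_congr rfl fun k _ => by rw [add_comm, pow_succ']

theorem sum_Icc_one_pow_succ [Semiring R] (r : R) (m : ℕ) :
    ∑ k ∈ Icc 1 (m + 1), r ^ k = r * (1 + ∑ k ∈ Icc 1 m, r ^ k) := by
  rw [sum_Icc_one_pow_eq_mul_sum_range, sum_Icc_one_pow_eq_mul_sum_range, geom_sum_succ,
    add_comm (r * _)]

theorem tendsto_sum_Icc_one_pow [NormedDivisionRing R] {r : R} (hr : ‖r‖ < 1) :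
    Tendsto (fun m => ∑ k ∈ Icc 1 m, r ^ k) atTop (𝓝 (r * (1 - r)⁻¹)) := by
  simp_rw [sum_Icc_one_pow_eq_mul_sum_range]
  exact (hasSum_geometric_of_norm_lt_one hr).tendsto_sum_nat.const_mul r

end GeometricSums

theorem tendsto_sum_Icc_one_half_pow :
    Tendsto (fun m => ∑ k ∈ Icc 1 m, ((1 : ℂ) / 2) ^ k) atTop (𝓝 1) := by
  convert tendsto_sum_Icc_one_pow (r := (1 : ℂ) / 2) (by norm_num) using 2
  norm_num

theorem P0_mul_mul_P0 (ρ : Matrix (Fin 2) (Fin 2) ℂ) : P0 * ρ * P0 = ρ 0 0 • P0 := by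
  ext i j
  fin_cases i <;> fin_cases j <;> simp [P0, mul_apply, single]

theorem P1_mul_mul_P1 (ρ : Matrix (Fin 2) (Fin 2) ℂ) : P1 * ρ * P1 = ρ 1 1 • P1 := by
  ext i j
  fin_cases i <;> fin_cases j <;> simp [P1, mul_apply, single]

theorem Had_mul_P1_mul_Had : Had * P1 * Had = ((1 : ℂ) / 2) • !![1, -1; -1, 1] := by
  have hP1 : P1 = !![0, 0; 0, 1] := by
    ext i j
    fin_cases i <;> fin_cases j <;> simp [P1, single]
  have hsqrt : ((Real.sqrt 2 : ℝ) : ℂ)⁻¹ * ((Real.sqrt 2 : ℝ) : ℂ)⁻¹ = 1 / 2 := by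
    rw [← mul_inv, ← Complex.ofReal_mul, Real.mul_self_sqrt zero_le_two]
    norm_num
  rw [hP1, Had, Matrix.smul_mul, Matrix.mul_smul, Matrix.smul_mul, smul_smul, one_div,
    Complex.ofReal_inv, hsqrt]
  congr 1
  simp

theorem coinStep_fst_apply
    (CF : (Matrix (Fin 2) (Fin 2) ℂ →ₗ[ℂ] Matrix (Fin 2) (Fin 2) ℂ) × Matrix (Fin 2) (Fin 2) ℂ)
    (ρ : Matrix (Fin 2) (Fin 2) ℂ) :
    (coinStep CF).1 ρ = ρ 0 0 • P0 + (ρ 1 1 / 2) • CF.1 !![1, -1; -1, 1] := by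
  have hbranch : Had * (P1 * (ρ * P1) * Had) = (ρ 1 1 / 2) • !![1, -1; -1, 1] := by
    rw [show Had * (P1 * (ρ * P1) * Had) = Had * (P1 * ρ * P1) * Had by
        simp only [Matrix.mul_assoc],
      P1_mul_mul_P1, Matrix.mul_smul, Matrix.smul_mul, Had_mul_P1_mul_Had, smul_smul, mul_one_div]
  simp only [coinStep, LinearMap.add_apply, LinearMap.comp_apply, LinearMap.mulLeft_apply,
    LinearMap.mulRight_apply, ← mul_assoc P0, P0_mul_mul_P0, hbranch, map_smul]

theorem coinStep_iterate_succ_fst_apply (m : ℕ) (ρ : Matrix (Fin 2) (Fin 2) ℂ) :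
    ((coinStep^[m + 1]) (0, 0)).1 ρ =
      (ρ 0 0 + (∑ k ∈ Icc 1 m, ((1 : ℂ) / 2) ^ k) * ρ 1 1) • P0 := by
  induction m generalizing ρ with
  | zero => simp [coinStep_fst_apply]
  | succ m ih =>
    rw [Function.iterate_succ_apply', coinStep_fst_apply, ih, smul_smul, ← add_smul,
      sum_Icc_one_pow_succ]
    congr 1
    simp only [of_apply, cons_val', cons_val_zero, cons_val_one, empty_val', cons_val_fin_one]
    ring

/-- The iterates of the coin-flip loop map, started from `(0, 0)`, have first
component `ρ ↦ P₀ ρ P₀ + (Σ_{k=1}^{n-1} 2^{-k}) ⟨1|ρ|1⟩ |0⟩⟨0|`, and converge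
(entrywise) to `ρ ↦ Tr(ρ) |0⟩⟨0|`. -/
theorem coin_loop_fixed_point :
    (∀ n : ℕ, 1 ≤ n → ∀ ρ : Matrix (Fin 2) (Fin 2) ℂ,
        ((coinStep^[n]) (0, 0)).1 ρ =
          P0 * ρ * P0 + ((∑ k ∈ Finset.Icc 1 (n - 1), ((1 : ℂ) / 2) ^ k) * ρ 1 1) • P0) ∧
      ∀ ρ : Matrix (Fin 2) (Fin 2) ℂ, ∀ i j : Fin 2,
        Filter.Tendsto (fun n : ℕ => (((coinStep^[n]) (0, 0)).1 ρ) i j)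
          Filter.atTop (nhds ((ρ.trace • P0) i j)) := by
  have hiter : ∀ n, 1 ≤ n → ∀ ρ : Matrix (Fin 2) (Fin 2) ℂ, ((coinStep^[n]) (0, 0)).1 ρ =
      (ρ 0 0 + (∑ k ∈ Icc 1 (n - 1), ((1 : ℂ) / 2) ^ k) * ρ 1 1) • P0 := by
    intro n hn ρ
    obtain ⟨m, rfl⟩ := Nat.exists_eq_add_of_le' hn
    exact coinStep_iterate_succ_fst_apply m ρ
  refine ⟨fun n hn ρ => by rw [hiter n hn, add_smul, P0_mul_mul_P0], fun ρ i j => ?_⟩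
  have hcoeff : Tendsto (fun n => ρ 0 0 + (∑ k ∈ Icc 1 (n - 1), ((1 : ℂ) / 2) ^ k) * ρ 1 1)
      atTop (𝓝 ρ.trace) := by
    rw [trace_fin_two]
    simpa using ((tendsto_sum_Icc_one_half_pow.comp (tendsto_sub_atTop_nat 1)).mul_const
      (ρ 1 1)).const_add (ρ 0 0)
  refine (hcoeff.mul_const (P0 i j)).congr' ?_
  filter_upwards [eventually_ge_atTop 1] with n hn
  rw [hiter n hn, Matrix.smul_apply, smul_eq_mul]
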